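/- Let ρ ≥ 0, L > 0, let F : ℝ^d → ℝ^d be L-Lipschitz and ρ-negatively comonotone, with F(x*) = 0, and let (x^k), (x̃^k) be Extragradient iterates with equal stepsizes γ₁ = γ₂ = γ where 4ρ ≤ γ ≤ 1/(2L). Define the potential Φ_k = ‖x^k − x*‖² + (kγ²(1 − 5ρ/(2γ) − L²γ²) + 40γρ)‖F(x^k)‖². Then Φ_{k+1} ≤ Φ_k for every k ≥ 0. -/

import Mathlib

open RealInnerProductSpace

/-!
Write `a = F x`, `b = F x̃`, `c = F x⁺` for one Extragradient step `x ↦ x⁺`. Comonotonicity at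
`(x̃, x*)` bounds the change of `‖x − x*‖²` by `2γρ‖b‖² + γ²‖a − b‖² − γ²‖a‖²`. Comonotonicity
along the two half-steps, together with `‖c − b‖ ≤ Lγ‖a − b‖`, gives
`‖c‖² ≤ ‖a‖² − ‖a − b‖²/16` as soon as `4ρ ≤ γ` and `Lγ ≤ 1/2`. In the potential, the
constant weight `40γρ` on `‖F‖²` absorbs the positive `ρ`-terms of the distance estimate, and
the slope `γ²(1 − 5ρ/(2γ) − L²γ²)` of the growing weight is paid for by the `−γ²‖a‖²` term.
-/

def IsNegComonotone {E : Type*} [NormedAddCommGroup E] [InnerProductSpace ℝ E]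
    (ρ : ℝ) (F : E → E) : Prop :=
  ∀ u v, -ρ * ‖F u - F v‖ ^ 2 ≤ ⟪F u - F v, u - v⟫

section Extragradient

variable {E : Type*} [NormedAddCommGroup E] [InnerProductSpace ℝ E]
  {F : E → E} {ρ L γ : ℝ} {u v w x xt xn xs : E}

lemma IsNegComonotone.le_inner_of_sub_eq_smul (hF : IsNegComonotone ρ F)
    (h : u - v = γ • w) : -ρ * ‖F u - F v‖ ^ 2 ≤ γ * ⟪F u - F v, w⟫ := by
  simpa only [h, real_inner_smul_right] using hF u v

lemma norm_sub_sq_le_of_sub_eq_smul (hLip : ∀ u v, ‖F u - F v‖ ≤ L * ‖u - v‖)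
    (h : u - v = γ • w) : ‖F u - F v‖ ^ 2 ≤ (L * γ) ^ 2 * ‖w‖ ^ 2 := by
  have hle := hLip u v
  rw [h, norm_smul, Real.norm_eq_abs] at hle
  calc ‖F u - F v‖ ^ 2 ≤ (L * (|γ| * ‖w‖)) ^ 2 := pow_le_pow_left₀ (norm_nonneg _) hle 2
    _ = (L * γ) ^ 2 * ‖w‖ ^ 2 := by rw [mul_pow, mul_pow, sq_abs]; ring

lemma extragradient_dist_sq_le (hF : IsNegComonotone ρ F) (hxs : F xs = 0) (hγ : 0 ≤ γ)
    (hxt : xt = x - γ • F x) (hxn : xn = x - γ • F xt) :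
    ‖xn - xs‖ ^ 2 ≤ ‖x - xs‖ ^ 2 + 2 * γ * ρ * ‖F xt‖ ^ 2
      + γ ^ 2 * ‖F x - F xt‖ ^ 2 - γ ^ 2 * ‖F x‖ ^ 2 := by
  have hcomon : -ρ * ‖F xt‖ ^ 2 ≤ ⟪F xt, xt - xs⟫ := by
    simpa only [hxs, sub_zero] using hF xt xs
  have hstep : ‖xn - xs‖ ^ 2
      = ‖x - xs‖ ^ 2 - 2 * (γ * ⟪x - xs, F xt⟫) + γ ^ 2 * ‖F xt‖ ^ 2 := by
    rw [show xn - xs = (x - xs) - γ • F xt by rw [hxn]; abel, norm_sub_sq_real,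
      real_inner_smul_right, norm_smul, mul_pow, Real.norm_eq_abs, sq_abs]
  have hinner : ⟪x - xs, F xt⟫ = ⟪F xt, xt - xs⟫ + γ * ⟪F x, F xt⟫ := by
    rw [show x - xs = (xt - xs) + γ • F x by rw [hxt]; abel, inner_add_left,
      real_inner_smul_left, real_inner_comm]
  linear_combination hstep + 2 * γ * hcomon - 2 * γ * hinner
    - γ ^ 2 * norm_sub_sq_real (F x) (F xt)

lemma extragradient_norm_sq_apply_extrapolation_le (hF : IsNegComonotone ρ F)
    (hxt : xt = x - γ • F x) :
    γ * ‖F xt‖ ^ 2 ≤ γ * ‖F x‖ ^ 2 + (γ + 2 * ρ) * ‖F x - F xt‖ ^ 2 := by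
  have hcomon := hF.le_inner_of_sub_eq_smul (show xt - x = (-γ) • F x by rw [hxt]; module)
  rw [norm_sub_rev] at hcomon
  have hexp := norm_add_sq_real (F x) (F xt - F x)
  rw [add_sub_cancel, real_inner_comm, norm_sub_rev] at hexp
  linear_combination γ * hexp + 2 * hcomon

lemma extragradient_norm_sq_apply_le (hF : IsNegComonotone ρ F)
    (hLip : ∀ u v, ‖F u - F v‖ ≤ L * ‖u - v‖) (hρ : 0 ≤ ρ) (hργ : 4 * ρ ≤ γ)
    (hLγ : (L * γ) ^ 2 ≤ 1 / 4) (hxt : xt = x - γ • F x) (hxn : xn = x - γ • F xt) :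
    ‖F xn‖ ^ 2 ≤ ‖F x‖ ^ 2 - ‖F x - F xt‖ ^ 2 / 16 := by
  rcases (show 0 ≤ γ by linarith).eq_or_lt with rfl | hγ
  · simp [hxt, hxn]
  have hxn_xt : xn - xt = γ • (F x - F xt) := by rw [hxn, hxt]; module
  have h1 := hF.le_inner_of_sub_eq_smul (show xn - x = (-γ) • F xt by rw [hxn]; module)
  have h2 := hF.le_inner_of_sub_eq_smul hxn_xt
  have h3 := norm_sub_sq_le_of_sub_eq_smul hLip hxn_xt
  have e1 : ‖F xn‖ ^ 2 - ‖F x‖ ^ 2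
      = 2 * ⟪F xn - F x, F xt⟫ + ‖F xn - F xt‖ ^ 2 - ‖F x - F xt‖ ^ 2 := by
    linear_combination norm_sub_sq_real (F x) (F xt) - norm_sub_sq_real (F xn) (F xt)
      - 2 * inner_sub_left (𝕜 := ℝ) (F xn) (F x) (F xt)
  have e2 := norm_sub_sq_real (F xn - F xt) (F x - F xt)
  rw [sub_sub_sub_cancel_right] at e2
  have hkey : γ ^ 2 * (‖F xn‖ ^ 2 - ‖F x‖ ^ 2) ≤ (2 * ρ * γ + 4 * ρ ^ 2 + γ ^ 2) * ‖F xn - F xt‖ ^ 2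
      + (2 * ρ * γ - γ ^ 2) * ‖F x - F xt‖ ^ 2 := by
    linear_combination 2 * γ * h1 + 4 * ρ * h2 + γ ^ 2 * e1 + 2 * γ * ρ * e2
  have hcoef : (2 * ρ * γ + 4 * ρ ^ 2 + γ ^ 2) * (L * γ) ^ 2 + 2 * ρ * γ - γ ^ 2
      ≤ -(γ ^ 2 / 16) := by
    nlinarith [mul_nonneg (sub_nonneg.2 hργ) (by linarith : 0 ≤ 11 * γ + 4 * ρ),
      mul_nonneg (sub_nonneg.2 hLγ) (by positivity : 0 ≤ 2 * ρ * γ + 4 * ρ ^ 2 + γ ^ 2)]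
  have hscaled : γ ^ 2 * (‖F xn‖ ^ 2 - ‖F x‖ ^ 2) ≤ γ ^ 2 * -(‖F x - F xt‖ ^ 2 / 16) := by
    linear_combination hkey + (2 * ρ * γ + 4 * ρ ^ 2 + γ ^ 2) * h3
      + ‖F x - F xt‖ ^ 2 * hcoef
  linarith [le_of_mul_le_mul_left hscaled (by positivity)]

lemma extragradient_potential_le (hF : IsNegComonotone ρ F)
    (hLip : ∀ u v, ‖F u - F v‖ ≤ L * ‖u - v‖) (hxs : F xs = 0) (hρ : 0 ≤ ρ)
    (hργ : 4 * ρ ≤ γ) (hLγ : (L * γ) ^ 2 ≤ 1 / 4) (hxt : xt = x - γ • F x)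
    (hxn : xn = x - γ • F xt) {k s : ℝ} (hk : 0 ≤ k) (hs₀ : 0 ≤ s)
    (hs : s ≤ γ ^ 2 - 5 / 2 * ρ * γ - L ^ 2 * γ ^ 4) :
    ‖xn - xs‖ ^ 2 + ((k + 1) * s + 40 * γ * ρ) * ‖F xn‖ ^ 2
      ≤ ‖x - xs‖ ^ 2 + (k * s + 40 * γ * ρ) * ‖F x‖ ^ 2 := by
  have hγ : 0 ≤ γ := by linarith
  have hdist := extragradient_dist_sq_le hF hxs hγ hxt hxn
  have hdecr := extragradient_norm_sq_apply_le hF hLip hρ hργ hLγ hxt hxn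
  have hFxt := extragradient_norm_sq_apply_extrapolation_le hF hxt
  have hlip : ‖F x - F xt‖ ^ 2 ≤ (L * γ) ^ 2 * ‖F x‖ ^ 2 :=
    norm_sub_sq_le_of_sub_eq_smul hLip (show x - xt = γ • F x by rw [hxt]; abel)
  have hquarter : ‖F x - F xt‖ ^ 2 ≤ ‖F x‖ ^ 2 / 4 := by
    linarith [mul_le_mul_of_nonneg_right hLγ (sq_nonneg ‖F x‖)]
  have hweight : ((k + 1) * s + 40 * γ * ρ) * (‖F xn‖ ^ 2 - ‖F x‖ ^ 2)
      ≤ 40 * γ * ρ * -(‖F x - F xt‖ ^ 2 / 16) :=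
    calc ((k + 1) * s + 40 * γ * ρ) * (‖F xn‖ ^ 2 - ‖F x‖ ^ 2)
        ≤ 40 * γ * ρ * (‖F xn‖ ^ 2 - ‖F x‖ ^ 2) :=
          mul_le_mul_of_nonpos_right (le_add_of_nonneg_left (mul_nonneg (by linarith) hs₀))
            (by linarith [sq_nonneg ‖F x - F xt‖])
      _ ≤ 40 * γ * ρ * -(‖F x - F xt‖ ^ 2 / 16) :=
          mul_le_mul_of_nonneg_left (by linarith) (by positivity)
  linarith [mul_le_mul_of_nonneg_left hFxt (by positivity : 0 ≤ 2 * ρ),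
    mul_le_mul_of_nonneg_left hs (sq_nonneg ‖F x‖),
    mul_le_mul_of_nonneg_left hlip (sq_nonneg γ),
    mul_nonneg (mul_nonneg hρ hγ) (sub_nonneg.2 hquarter),
    mul_nonneg (mul_nonneg (sub_nonneg.2 hργ) hρ) (sq_nonneg ‖F x - F xt‖),
    mul_nonneg (mul_nonneg hρ hγ) (sq_nonneg ‖F x‖)]

end Extragradient

/-- Potential decrease for Extragradient with equal stepsizes `4ρ ≤ γ ≤ 1/(2L)`
under `L`-Lipschitzness and `ρ`-negative comonotonicity:
`Φ_{k+1} ≤ Φ_k` where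
`Φ_k = ‖x^k − x*‖² + (kγ²(1 − 5ρ/(2γ) − L²γ²) + 40γρ)‖F(x^k)‖²`. -/
theorem stmt_12 {d : ℕ} (ρ L : ℝ) (hρ : 0 ≤ ρ) (hL : 0 < L)
    (F : EuclideanSpace ℝ (Fin d) → EuclideanSpace ℝ (Fin d))
    (hLip : ∀ x y, ‖F x - F y‖ ≤ L * ‖x - y‖)
    (hcomon : ∀ x y, ⟪F x - F y, x - y⟫ ≥ -ρ * ‖F x - F y‖ ^ 2)
    (xs : EuclideanSpace ℝ (Fin d)) (hxs : F xs = 0)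
    (γ : ℝ) (hγl : 4 * ρ ≤ γ) (hγu : γ ≤ 1 / (2 * L))
    (x xt : ℕ → EuclideanSpace ℝ (Fin d))
    (hxt : ∀ k : ℕ, xt k = x k - γ • F (x k))
    (hx : ∀ k : ℕ, x (k + 1) = x k - γ • F (xt k))
    (Φ : ℕ → ℝ)
    (hΦ : ∀ k : ℕ, Φ k = ‖x k - xs‖ ^ 2 +
      ((k : ℝ) * γ ^ 2 * (1 - 5 * ρ / (2 * γ) - L ^ 2 * γ ^ 2) + 40 * γ * ρ) *
        ‖F (x k)‖ ^ 2) :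
    ∀ k : ℕ, Φ (k + 1) ≤ Φ k := by
  intro k
  have hγ : 0 ≤ γ := by linarith
  have hLγ : (L * γ) ^ 2 ≤ 1 / 4 := by
    have : L * γ ≤ 1 / 2 := by
      rw [le_div_iff₀ (by positivity)] at hγu
      linarith
    nlinarith [mul_nonneg hL.le hγ]
  have hslope : γ ^ 2 * (1 - 5 * ρ / (2 * γ) - L ^ 2 * γ ^ 2)
      = γ ^ 2 - 5 / 2 * ρ * γ - L ^ 2 * γ ^ 4 := by
    rcases hγ.eq_or_lt with rfl | hγpos
    · simp -- both sides vanish, `5 * ρ / 0` being `0`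
    · field_simp
  have hslope_nonneg : 0 ≤ γ ^ 2 - 5 / 2 * ρ * γ - L ^ 2 * γ ^ 4 := by
    nlinarith [mul_nonneg (sub_nonneg.2 hγl) hγ]
  have hstep := extragradient_potential_le hcomon hLip hxs hρ hγl hLγ (hxt k) (hx k)
    k.cast_nonneg (hslope ▸ hslope_nonneg) hslope.le
  rw [hΦ, hΦ]
  push_cast
  linarith
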